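/- Let π be a probability distribution over thresholds with finite support contained in {0,…,K} and with π not concentrated on 0. For λ > 0 define m(λ) = ∑_k π_k · (∑_{i=0}^k i λ^i)/(∑_{i=0}^k λ^i). Then m is continuous and strictly increasing on (0,∞), with m(λ) → 0 as λ → 0⁺ and m(λ) → ∑_k π_k k as λ → ∞. Consequently, for every m with 0 < m < ∑_k π_k k there is a unique λ > 0 achieving mean m. -/

import Mathlib

/-!
Each summand `λ ↦ (∑ i λ^i)/(∑ λ^i)` is the mean of the truncated geometric law on `{0,…,k}`.
Cross-multiplying, monotonicity in `λ` is a Chebyshev-type inequality: after symmetrising the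
double sum, every term `(i - j) (bⁱ aʲ - aⁱ bʲ)` is nonnegative for `a ≤ b`, and the term
`(i, j) = (1, 0)` is strictly positive. Reversing the index `i ↦ k - i` shows that the mean at `λ`
and at `λ⁻¹` add up to `k`, so the limit at `∞` follows from continuity at `0`, where the
mean vanishes.
-/

open Finset Filter Set Topology

lemma two_mul_sum_mul_sum_sub_eq_sum_sum {ι R : Type*} [CommRing R] (s : Finset ι)
    (c p q : ι → R) :
    2 * ((∑ i ∈ s, c i * q i) * (∑ j ∈ s, p j) - (∑ i ∈ s, c i * p i) * (∑ j ∈ s, q j)) =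
      ∑ i ∈ s, ∑ j ∈ s, (c i - c j) * (q i * p j - p i * q j) := by
  set g : ι → ι → R := fun i j => c i * (q i * p j - p i * q j)
  have hsplit : ∀ i j, (c i - c j) * (q i * p j - p i * q j) = g i j + g j i := fun i j => by
    simp only [g]; ring
  simp_rw [hsplit, sum_add_distrib]
  rw [sum_comm (f := fun i j => g j i)]
  simp only [g, sum_mul_sum, mul_sub, sum_sub_distrib]
  ring_nf

lemma pow_mul_pow_le_pow_mul_pow {R : Type*} [CommSemiring R] [PartialOrder R]
    [IsOrderedRing R] {a b : R} (ha : 0 ≤ a) (hab : a ≤ b) {i j : ℕ} (hji : j ≤ i) :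
    a ^ i * b ^ j ≤ b ^ i * a ^ j := by
  obtain ⟨d, rfl⟩ := Nat.exists_eq_add_of_le' hji
  calc a ^ (d + j) * b ^ j = a ^ d * (a ^ j * b ^ j) := by ring
    _ ≤ b ^ d * (a ^ j * b ^ j) :=
      mul_le_mul_of_nonneg_right (pow_le_pow_left₀ ha hab d)
        (mul_nonneg (pow_nonneg ha j) (pow_nonneg (ha.trans hab) j))
    _ = b ^ (d + j) * a ^ j := by ring

lemma sub_mul_pow_cross_nonneg {a b : ℝ} (ha : 0 ≤ a) (hab : a ≤ b) (i j : ℕ) :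
    0 ≤ ((i : ℝ) - j) * (b ^ i * a ^ j - a ^ i * b ^ j) := by
  rcases le_total j i with hji | hij
  · exact mul_nonneg (sub_nonneg.2 (by exact_mod_cast hji))
      (sub_nonneg.2 (pow_mul_pow_le_pow_mul_pow ha hab hji))
  · refine mul_nonneg_of_nonpos_of_nonpos (sub_nonpos.2 (by exact_mod_cast hij)) ?_
    linarith [pow_mul_pow_le_pow_mul_pow ha hab hij]

noncomputable def truncGeomMean (k : ℕ) (x : ℝ) : ℝ :=
  (∑ i ∈ range (k + 1), (i : ℝ) * x ^ i) / ∑ i ∈ range (k + 1), x ^ i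

lemma sum_range_pow_pos (k : ℕ) {x : ℝ} (hx : 0 ≤ x) : 0 < ∑ i ∈ range (k + 1), x ^ i := by
  rw [sum_range_succ']
  positivity

lemma truncGeomMean_zero (k : ℕ) : truncGeomMean k 0 = 0 := by
  rw [truncGeomMean, sum_eq_zero fun i _ => by cases i <;> simp, zero_div]

lemma continuousAt_truncGeomMean (k : ℕ) {x : ℝ} (hx : 0 ≤ x) :
    ContinuousAt (truncGeomMean k) x := by
  unfold truncGeomMean
  fun_prop (disch := exact (sum_range_pow_pos k hx).ne')

lemma continuousOn_truncGeomMean (k : ℕ) : ContinuousOn (truncGeomMean k) (Ici 0) :=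
  fun _ hx => (continuousAt_truncGeomMean k hx).continuousWithinAt

lemma monotoneOn_truncGeomMean (k : ℕ) : MonotoneOn (truncGeomMean k) (Ici 0) := by
  intro a ha b _ hab
  rw [truncGeomMean, truncGeomMean,
    div_le_div_iff₀ (sum_range_pow_pos k ha) (sum_range_pow_pos k (ha.trans hab))]
  have hcross := two_mul_sum_mul_sum_sub_eq_sum_sum (range (k + 1)) (fun i => (i : ℝ))
    (a ^ ·) (b ^ ·)
  have hnonneg := sum_nonneg fun i (_ : i ∈ range (k + 1)) => sum_nonneg
    fun j (_ : j ∈ range (k + 1)) => sub_mul_pow_cross_nonneg ha hab i j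
  linarith

lemma strictMonoOn_truncGeomMean {k : ℕ} (hk : k ≠ 0) :
    StrictMonoOn (truncGeomMean k) (Ici 0) := by
  intro a ha b _ hab
  rw [truncGeomMean, truncGeomMean,
    div_lt_div_iff₀ (sum_range_pow_pos k ha) (sum_range_pow_pos k (ha.trans hab.le))]
  have hcross := two_mul_sum_mul_sum_sub_eq_sum_sum (range (k + 1)) (fun i => (i : ℝ))
    (a ^ ·) (b ^ ·)
  have hmem : ∀ i ≤ 1, i ∈ range (k + 1) := fun i hi => mem_range.2 (by omega)
  have hpos : 0 < ∑ i ∈ range (k + 1), ∑ j ∈ range (k + 1),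
      ((i : ℝ) - j) * (b ^ i * a ^ j - a ^ i * b ^ j) := by
    refine sum_pos' (fun i _ => sum_nonneg fun j _ => sub_mul_pow_cross_nonneg ha hab.le i j)
      ⟨1, hmem 1 le_rfl, sum_pos' (fun j _ => sub_mul_pow_cross_nonneg ha hab.le 1 j)
        ⟨0, hmem 0 zero_le_one, ?_⟩⟩
    simpa using hab
  linarith

lemma sum_range_mul_pow_reflect {F : Type*} [Field F] (c : ℕ → F) (k : ℕ) {x : F}
    (hx : x ≠ 0) :
    ∑ i ∈ range (k + 1), c i * x ^ i = x ^ k * ∑ j ∈ range (k + 1), c (k - j) * x⁻¹ ^ j := by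
  rw [← sum_range_reflect, mul_sum]
  refine sum_congr rfl fun j hj => ?_
  rw [add_tsub_cancel_right, pow_sub₀ x hx (mem_range_succ_iff.1 hj), inv_pow]
  ring

lemma truncGeomMean_add_truncGeomMean_inv (k : ℕ) {x : ℝ} (hx : 0 < x) :
    truncGeomMean k x + truncGeomMean k x⁻¹ = k := by
  have hden := sum_range_mul_pow_reflect (fun _ => (1 : ℝ)) k hx.ne'
  have hnum := sum_range_mul_pow_reflect (fun i => (i : ℝ)) k hx.ne'
  simp only [one_mul] at hden
  have hcast : ∀ j ∈ range (k + 1),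
      ((k - j : ℕ) : ℝ) * x⁻¹ ^ j = k * x⁻¹ ^ j - j * x⁻¹ ^ j := fun j hj => by
    rw [Nat.cast_sub (mem_range_succ_iff.1 hj)]
    ring
  rw [sum_congr rfl hcast, sum_sub_distrib, ← mul_sum] at hnum
  have hpos := sum_range_pow_pos k (inv_pos.2 hx).le
  rw [truncGeomMean, truncGeomMean, hnum, hden, mul_div_mul_left _ _ (pow_ne_zero k hx.ne')]
  field_simp
  ring

lemma tendsto_truncGeomMean_atTop (k : ℕ) : Tendsto (truncGeomMean k) atTop (𝓝 k) := by
  have hinv : Tendsto (fun x => truncGeomMean k x⁻¹) atTop (𝓝 0) := by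
    rw [← truncGeomMean_zero k]
    exact (continuousAt_truncGeomMean k le_rfl).tendsto.comp tendsto_inv_atTop_zero
  have hlim : Tendsto (fun x => (k : ℝ) - truncGeomMean k x⁻¹) atTop (𝓝 k) := by
    simpa using tendsto_const_nhds.sub hinv
  refine hlim.congr' ?_
  filter_upwards [eventually_gt_atTop 0] with x hx
  linarith [truncGeomMean_add_truncGeomMean_inv k hx]

lemma strictMonoOn_sum_mul {ι α : Type*} [Preorder α] {s : Finset ι} {S : Set α}
    {w : ι → ℝ} {f : ι → α → ℝ} (hw : ∀ i ∈ s, 0 ≤ w i) (hf : ∀ i ∈ s, MonotoneOn (f i) S)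
    {i₀ : ι} (hi₀ : i₀ ∈ s) (hwi₀ : 0 < w i₀) (hfi₀ : StrictMonoOn (f i₀) S) :
    StrictMonoOn (fun x => ∑ i ∈ s, w i * f i x) S := fun _ ha _ hb hab =>
  sum_lt_sum (fun i hi => mul_le_mul_of_nonneg_left (hf i hi ha hb hab.le) (hw i hi))
    ⟨i₀, hi₀, mul_lt_mul_of_pos_left (hfi₀ ha hb hab) hwi₀⟩

lemma exists_mem_ne_pos_of_lt_sum {ι M : Type*} [AddCommMonoid M] [LinearOrder M]
    [IsOrderedCancelAddMonoid M] {s : Finset ι} {f : ι → M} {i₀ : ι} (hi₀ : i₀ ∈ s)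
    (h : f i₀ < ∑ i ∈ s, f i) : ∃ i ∈ s, i ≠ i₀ ∧ 0 < f i := by
  classical
  rw [← add_sum_erase s f hi₀] at h
  have hrest : ∑ _ ∈ s.erase i₀, (0 : M) < ∑ i ∈ s.erase i₀, f i := by
    simpa using h
  obtain ⟨i, hi, hpos⟩ := exists_lt_of_sum_lt hrest
  exact ⟨i, mem_of_mem_erase hi, ne_of_mem_erase hi, hpos⟩

lemma StrictMonoOn.existsUnique_eq_of_tendsto {α β : Type*} [ConditionallyCompleteLinearOrder α]
    [DenselyOrdered α] [NoMaxOrder α] [TopologicalSpace α] [OrderTopology α] [LinearOrder β]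
    [TopologicalSpace β] [OrderClosedTopology β] {F : α → β} {a : α} {l L m : β}
    (hmono : StrictMonoOn F (Ioi a)) (hcont : ContinuousOn F (Ioi a))
    (hl : Tendsto F (𝓝[>] a) (𝓝 l)) (hL : Tendsto F atTop (𝓝 L)) (hlm : l < m)
    (hmL : m < L) : ∃! x, x ∈ Ioi a ∧ F x = m := by
  obtain ⟨p, hFp, hp⟩ := ((hl.eventually (eventually_lt_nhds hlm)).and self_mem_nhdsWithin).exists
  obtain ⟨q, hFq, hq⟩ := ((hL.eventually (eventually_gt_nhds hmL)).and
    (eventually_gt_atTop a)).exists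
  obtain ⟨x, hx, hFx⟩ := hcont.surjOn_Icc hp hq ⟨hFp.le, hFq.le⟩
  exact ⟨x, ⟨hx, hFx⟩, fun y hy => hmono.injOn hy.1 hx (hy.2.trans hFx.symm)⟩

theorem stmt_16_general (K : ℕ) (π : ℕ → ℝ) (hπ : ∀ k, 0 ≤ π k)
    (hπsum : ∑ k ∈ range (K + 1), π k = 1)
    (hnotdirac : π 0 < 1) :
    ContinuousOn
      (fun lam : ℝ => ∑ k ∈ range (K + 1), π k *
        ((∑ i ∈ range (k + 1), (i : ℝ) * lam ^ i) /
          (∑ i ∈ range (k + 1), lam ^ i))) (Set.Ioi 0) ∧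
    StrictMonoOn
      (fun lam : ℝ => ∑ k ∈ range (K + 1), π k *
        ((∑ i ∈ range (k + 1), (i : ℝ) * lam ^ i) /
          (∑ i ∈ range (k + 1), lam ^ i))) (Set.Ioi 0) ∧
    Tendsto
      (fun lam : ℝ => ∑ k ∈ range (K + 1), π k *
        ((∑ i ∈ range (k + 1), (i : ℝ) * lam ^ i) /
          (∑ i ∈ range (k + 1), lam ^ i)))
      (nhdsWithin 0 (Set.Ioi 0)) (nhds 0) ∧
    Tendsto
      (fun lam : ℝ => ∑ k ∈ range (K + 1), π k *
        ((∑ i ∈ range (k + 1), (i : ℝ) * lam ^ i) /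
          (∑ i ∈ range (k + 1), lam ^ i)))
      atTop (nhds (∑ k ∈ range (K + 1), π k * k)) ∧
    ∀ m : ℝ, 0 < m → m < ∑ k ∈ range (K + 1), π k * k →
      ∃! lam : ℝ, lam ∈ Set.Ioi (0 : ℝ) ∧
        ∑ k ∈ range (K + 1), π k *
          ((∑ i ∈ range (k + 1), (i : ℝ) * lam ^ i) /
            (∑ i ∈ range (k + 1), lam ^ i)) = m := by
  change ContinuousOn (fun lam => ∑ k ∈ range (K + 1), π k * truncGeomMean k lam) _ ∧ _
  set M := fun lam => ∑ k ∈ range (K + 1), π k * truncGeomMean k lam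
  obtain ⟨k₀, hk₀, hk₀ne, hπk₀⟩ :=
    exists_mem_ne_pos_of_lt_sum (mem_range.2 K.succ_pos) (hπsum ▸ hnotdirac)
  have hcont : ContinuousOn M (Ici 0) :=
    continuousOn_finsetSum _ fun k _ => continuousOn_const.mul (continuousOn_truncGeomMean k)
  have hmono : StrictMonoOn M (Ioi 0) :=
    (strictMonoOn_sum_mul (fun k _ => hπ k) (fun k _ => monotoneOn_truncGeomMean k) hk₀ hπk₀
      (strictMonoOn_truncGeomMean hk₀ne)).mono Ioi_subset_Ici_self
  have hzero : Tendsto M (𝓝[>] 0) (𝓝 0) := by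
    simpa [M, truncGeomMean_zero] using
      (hcont 0 self_mem_Ici).mono_left (nhdsWithin_mono _ Ioi_subset_Ici_self)
  have htop : Tendsto M atTop (𝓝 (∑ k ∈ range (K + 1), π k * k)) :=
    tendsto_finsetSum _ fun k _ => (tendsto_truncGeomMean_atTop k).const_mul (π k)
  exact ⟨hcont.mono Ioi_subset_Ici_self, hmono, hzero, htop,
    fun m hm hmK => hmono.existsUnique_eq_of_tendsto (hcont.mono Ioi_subset_Ici_self)
      hzero htop hm hmK⟩

/-- for a threshold distribution π supported in {0,…,K} and not
concentrated on 0, the mean money m(λ) = ∑_k π_k (∑ i λ^i)/(∑ λ^i) is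
continuous and strictly increasing on (0,∞), tends to 0 at 0⁺ and to ∑ π_k·k at
∞; hence every mean in (0, ∑ π_k·k) is achieved by a unique λ > 0. -/
theorem stmt_16 (K : ℕ) (π : ℕ → ℝ) (hπ : ∀ k, 0 ≤ π k)
    (hπsupp : ∀ k, K < k → π k = 0)
    (hπsum : ∑ k ∈ range (K + 1), π k = 1)
    (hnotdirac : π 0 < 1) :
    ContinuousOn
      (fun lam : ℝ => ∑ k ∈ range (K + 1), π k *
        ((∑ i ∈ range (k + 1), (i : ℝ) * lam ^ i) /
          (∑ i ∈ range (k + 1), lam ^ i))) (Set.Ioi 0) ∧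
    StrictMonoOn
      (fun lam : ℝ => ∑ k ∈ range (K + 1), π k *
        ((∑ i ∈ range (k + 1), (i : ℝ) * lam ^ i) /
          (∑ i ∈ range (k + 1), lam ^ i))) (Set.Ioi 0) ∧
    Tendsto
      (fun lam : ℝ => ∑ k ∈ range (K + 1), π k *
        ((∑ i ∈ range (k + 1), (i : ℝ) * lam ^ i) /
          (∑ i ∈ range (k + 1), lam ^ i)))
      (nhdsWithin 0 (Set.Ioi 0)) (nhds 0) ∧
    Tendsto
      (fun lam : ℝ => ∑ k ∈ range (K + 1), π k *
        ((∑ i ∈ range (k + 1), (i : ℝ) * lam ^ i) /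
          (∑ i ∈ range (k + 1), lam ^ i)))
      atTop (nhds (∑ k ∈ range (K + 1), π k * k)) ∧
    ∀ m : ℝ, 0 < m → m < ∑ k ∈ range (K + 1), π k * k →
      ∃! lam : ℝ, lam ∈ Set.Ioi (0 : ℝ) ∧
        ∑ k ∈ range (K + 1), π k *
          ((∑ i ∈ range (k + 1), (i : ℝ) * lam ^ i) /
            (∑ i ∈ range (k + 1), lam ^ i)) = m :=
  stmt_16_general K π hπ hπsum hnotdirac
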